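/- If for every training sample $i$ and every class $y$ one has $|\mathbb{1}[y_i = y] - \mathrm{logit}_y(F, X_i)| \leq \epsilon$, and the features and feature-gradients are uniformly bounded in norm by $B$, then the gradient of the empirical cross-entropy loss with respect to each classifier block $\theta_{y,s}$ has norm at most $\epsilon B$, and with respect to encoder weights $W_s$ has norm at most $k \epsilon B'$ where $B'$ bounds the norm of $\nabla_{W_s}\langle \theta_{y,s}, \varphi_s(W_s, X_i)\rangle$. In particular, as $\epsilon \to 0$ all gradients vanish regardless of the state of the encoders. -/

import Mathlib

open Real Finset
open scoped RealInnerProductSpace BigOperators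

/-!
Since `-log softmax = logSumExp - (true logit)`, the partial derivative of the empirical loss in
the logit `F i j` is `(softmax (F i) j - 𝟙[ylab i = j]) / n`, a residual of size at most `ε`.
By the chain rule every gradient is therefore the sample average of residual-weighted gradients
of the logits. Only the `y`-th logit depends on the classifier block `θ y`, with gradient the
feature vector, which gives `ε B`; every logit depends on an encoder weight, which costs the
factor `k`.
-/

/-- Empirical cross-entropy loss of logits `F i j` (sample `i`, class `j`) with labels `ylab`. -/
noncomputable def ceLoss {n k : ℕ} (F : Fin n → Fin k → ℝ) (ylab : Fin n → Fin k) : ℝ :=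
  (1 / n : ℝ) * ∑ i, -Real.log (Real.exp (F i (ylab i)) / ∑ j, Real.exp (F i j))

noncomputable def softmax {ι : Type*} [Fintype ι] (v : ι → ℝ) (j : ι) : ℝ :=
  exp (v j) / ∑ j', exp (v j')

theorem neg_log_softmax {ι : Type*} [Fintype ι] (v : ι → ℝ) (c : ι) :
    -log (softmax v c) = log (∑ j, exp (v j)) - v c := by
  have hpos : 0 < ∑ j, exp (v j) :=
    Finset.sum_pos' (fun j _ => (exp_pos _).le) ⟨c, mem_univ _, exp_pos _⟩
  rw [softmax, log_div (exp_ne_zero _) hpos.ne', log_exp, neg_sub]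

theorem ceLoss_eq {n k : ℕ} (F : Fin n → Fin k → ℝ) (ylab : Fin n → Fin k) :
    ceLoss F ylab = (1 / n : ℝ) * ∑ i, (log (∑ j, exp (F i j)) - F i (ylab i)) := by
  rw [ceLoss]
  congr 1
  exact sum_congr rfl fun i _ => neg_log_softmax (F i) (ylab i)

theorem norm_average_le {E : Type*} [SeminormedAddCommGroup E] [NormedSpace ℝ E] {n : ℕ}
    (hn : 0 < n) {a : Fin n → E} {C : ℝ} (ha : ∀ i, ‖a i‖ ≤ C) :
    ‖(1 / n : ℝ) • ∑ i, a i‖ ≤ C := by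
  have hn' : (0 : ℝ) < n := Nat.cast_pos.2 hn
  calc ‖(1 / n : ℝ) • ∑ i, a i‖ ≤ (1 / n) * ∑ _i : Fin n, C := by
        rw [norm_smul, Real.norm_of_nonneg (by positivity)]
        exact mul_le_mul_of_nonneg_left (norm_sum_le_of_le _ fun i _ => ha i) (by positivity)
    _ = C := by field_simp; simp

section Gradient

variable {X : Type*} [NormedAddCommGroup X] [InnerProductSpace ℝ X] [CompleteSpace X]
  {f : X → ℝ} {g x : X} {n k : ℕ} {F : X → Fin n → Fin k → ℝ} {ylab : Fin n → Fin k}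
  {ε C : ℝ} {G : X}

theorem HasGradientAt.add_const (h : HasGradientAt f g x) (c : ℝ) :
    HasGradientAt (fun z => f z + c) g x :=
  hasGradientAt_iff_hasFDerivAt.2 (h.hasFDerivAt.add_const c)

theorem HasGradientAt.const_add (h : HasGradientAt f g x) (c : ℝ) :
    HasGradientAt (fun z => c + f z) g x :=
  hasGradientAt_iff_hasFDerivAt.2 (h.hasFDerivAt.const_add c)

theorem hasGradientAt_inner_update {ι : Type*} [DecidableEq ι] (θ : ι → X) (y j : ι) (v : X) :
    HasGradientAt (fun t => ⟪Function.update θ y t j, v⟫) ((Pi.single y v : ι → X) j)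
      (θ y) := by
  rcases eq_or_ne j y with rfl | hne
  · simp only [Function.update_self, Pi.single_eq_same]
    simp_rw [real_inner_comm v]
    exact hasGradientAt_iff_hasFDerivAt.2 (InnerProductSpace.toDual ℝ X v).hasFDerivAt
  · simp only [Function.update_of_ne hne, Pi.single_eq_of_ne hne]
    exact hasGradientAt_const _ _

theorem hasGradientAt_log_sum_exp_sub {ι : Type*} [Fintype ι] [DecidableEq ι]
    {L : X → ι → ℝ} {d : ι → X} (c : ι) (hL : ∀ j, HasGradientAt (fun z => L z j) (d j) x) :
    HasGradientAt (fun z => log (∑ j, exp (L z j)) - L z c)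
      (∑ j, (softmax (L x) j - if c = j then 1 else 0) • d j) x := by
  have hpos : 0 < ∑ j, exp (L x j) :=
    Finset.sum_pos' (fun j _ => (exp_pos _).le) ⟨c, mem_univ _, exp_pos _⟩
  rw [hasGradientAt_iff_hasFDerivAt]
  refine (((HasFDerivAt.fun_sum fun j _ => (hL j).hasFDerivAt.exp).log hpos.ne').sub
    (hL c).hasFDerivAt).congr_fderiv ?_
  simp [map_sum, map_smul, sub_smul, Finset.sum_sub_distrib, softmax, div_eq_inv_mul, mul_smul,
    Finset.smul_sum]

theorem hasGradientAt_ceLoss {d : Fin n → Fin k → X}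
    (hF : ∀ i j, HasGradientAt (fun z => F z i j) (d i j) x) :
    HasGradientAt (fun z => ceLoss (F z) ylab)
      ((1 / n : ℝ) • ∑ i, ∑ j, (softmax (F x i) j - if ylab i = j then 1 else 0) • d i j) x := by
  simp_rw [ceLoss_eq]
  rw [hasGradientAt_iff_hasFDerivAt]
  have hsample i := (hasGradientAt_log_sum_exp_sub (ylab i) (hF i)).hasFDerivAt
  refine ((HasFDerivAt.fun_sum fun i _ => hsample i).const_mul (1 / n : ℝ)).congr_fderiv ?_
  simp [map_sum, map_smul]

theorem norm_le_of_hasGradientAt_ceLoss {d : Fin n → Fin k → X} (hn : 0 < n)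
    (hG : HasGradientAt (fun z => ceLoss (F z) ylab) G x)
    (hF : ∀ i j, HasGradientAt (fun z => F z i j) (d i j) x)
    (hres : ∀ i j, |(if ylab i = j then 1 else 0) - softmax (F x i) j| ≤ ε)
    (hd : ∀ i j, ‖d i j‖ ≤ C) :
    ‖G‖ ≤ k * ε * C := by
  have hε : 0 ≤ ε := (abs_nonneg _).trans (hres ⟨0, hn⟩ (ylab ⟨0, hn⟩))
  rw [hG.unique (hasGradientAt_ceLoss hF), mul_assoc]
  refine norm_average_le hn fun i => ?_
  calc ‖∑ j, (softmax (F x i) j - if ylab i = j then 1 else 0) • d i j‖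
      ≤ ∑ _j : Fin k, ε * C := norm_sum_le_of_le _ fun j _ => by
        rw [norm_smul, Real.norm_eq_abs, abs_sub_comm]
        exact mul_le_mul (hres i j) (hd i j) (norm_nonneg _) hε
    _ = k * (ε * C) := by simp

theorem norm_le_of_hasGradientAt_ceLoss_single {v : Fin n → X} (y : Fin k) (hn : 0 < n)
    (hG : HasGradientAt (fun z => ceLoss (F z) ylab) G x)
    (hF : ∀ i j, HasGradientAt (fun z => F z i j) ((Pi.single y (v i) : Fin k → X) j) x)
    (hres : ∀ i j, |(if ylab i = j then 1 else 0) - softmax (F x i) j| ≤ ε)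
    (hv : ∀ i, ‖v i‖ ≤ C) :
    ‖G‖ ≤ ε * C := by
  have hε : 0 ≤ ε := (abs_nonneg _).trans (hres ⟨0, hn⟩ y)
  rw [hG.unique (hasGradientAt_ceLoss hF)]
  simp only [Pi.single_apply, smul_ite, smul_zero, Finset.sum_ite_eq', mem_univ, if_true]
  refine norm_average_le hn fun i => ?_
  rw [norm_smul, Real.norm_eq_abs, abs_sub_comm]
  exact mul_le_mul (hres i y) (hv i) (norm_nonneg _) hε

end Gradient

theorem stmt_4_general
    {E1 E2 H1 H2 : Type*}
    [NormedAddCommGroup E1] [InnerProductSpace ℝ E1] [CompleteSpace E1]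
    [NormedAddCommGroup E2] [InnerProductSpace ℝ E2] [CompleteSpace E2]
    [NormedAddCommGroup H1] [InnerProductSpace ℝ H1] [CompleteSpace H1]
    [NormedAddCommGroup H2] [InnerProductSpace ℝ H2] [CompleteSpace H2]
    (n k : ℕ) (hn : 0 < n)
    (φ1 : H1 → Fin n → E1) (φ2 : H2 → Fin n → E2)
    (θ1 : Fin k → E1) (θ2 : Fin k → E2) (W1 : H1) (W2 : H2)
    (ylab : Fin n → Fin k) (ε B B' : ℝ)
    (hlogit : ∀ i y, |(if ylab i = y then (1 : ℝ) else 0) -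
        Real.exp (⟪θ1 y, φ1 W1 i⟫ + ⟪θ2 y, φ2 W2 i⟫) /
          ∑ j, Real.exp (⟪θ1 j, φ1 W1 i⟫ + ⟪θ2 j, φ2 W2 i⟫)| ≤ ε)
    (hB1 : ∀ i, ‖φ1 W1 i‖ ≤ B) (hB2 : ∀ i, ‖φ2 W2 i‖ ≤ B)
    (g1 : Fin n → Fin k → H1) (g2 : Fin n → Fin k → H2)
    (hg1 : ∀ i y, HasGradientAt (fun W => ⟪θ1 y, φ1 W i⟫) (g1 i y) W1)
    (hg2 : ∀ i y, HasGradientAt (fun W => ⟪θ2 y, φ2 W i⟫) (g2 i y) W2)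
    (hB'1 : ∀ i y, ‖g1 i y‖ ≤ B') (hB'2 : ∀ i y, ‖g2 i y‖ ≤ B') :
    -- gradients w.r.t. the classifier blocks are bounded by ε * B
    (∀ y G, HasGradientAt (fun t : E1 =>
        ceLoss (fun i j => ⟪Function.update θ1 y t j, φ1 W1 i⟫ + ⟪θ2 j, φ2 W2 i⟫) ylab)
        G (θ1 y) → ‖G‖ ≤ ε * B) ∧
    (∀ y G, HasGradientAt (fun t : E2 =>
        ceLoss (fun i j => ⟪θ1 j, φ1 W1 i⟫ + ⟪Function.update θ2 y t j, φ2 W2 i⟫) ylab)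
        G (θ2 y) → ‖G‖ ≤ ε * B) ∧
    -- gradients w.r.t. the encoder weights are bounded by k * ε * B'
    (∀ G, HasGradientAt (fun W : H1 =>
        ceLoss (fun i j => ⟪θ1 j, φ1 W i⟫ + ⟪θ2 j, φ2 W2 i⟫) ylab) G W1 →
      ‖G‖ ≤ k * ε * B') ∧
    (∀ G, HasGradientAt (fun W : H2 =>
        ceLoss (fun i j => ⟪θ1 j, φ1 W1 i⟫ + ⟪θ2 j, φ2 W i⟫) ylab) G W2 →
      ‖G‖ ≤ k * ε * B') := by
  have hres : ∀ i j, |(if ylab i = j then 1 else 0) -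
      softmax (fun j => ⟪θ1 j, φ1 W1 i⟫ + ⟪θ2 j, φ2 W2 i⟫) j| ≤ ε := hlogit
  refine ⟨fun y G hG => ?_, fun y G hG => ?_, fun G hG => ?_, fun G hG => ?_⟩
  · refine norm_le_of_hasGradientAt_ceLoss_single y hn hG (fun i j => ?_)
      (by simpa only [Function.update_eq_self] using hres) hB1
    exact (hasGradientAt_inner_update θ1 y j (φ1 W1 i)).add_const _
  · refine norm_le_of_hasGradientAt_ceLoss_single y hn hG (fun i j => ?_)
      (by simpa only [Function.update_eq_self] using hres) hB2
    exact (hasGradientAt_inner_update θ2 y j (φ2 W2 i)).const_add _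
  · exact norm_le_of_hasGradientAt_ceLoss hn hG (fun i j => (hg1 i j).add_const _) hres hB'1
  · exact norm_le_of_hasGradientAt_ceLoss hn hG (fun i j => (hg2 i j).const_add _) hres hB'2

theorem stmt_4
    {E1 E2 H1 H2 : Type*}
    [NormedAddCommGroup E1] [InnerProductSpace ℝ E1] [CompleteSpace E1]
    [NormedAddCommGroup E2] [InnerProductSpace ℝ E2] [CompleteSpace E2]
    [NormedAddCommGroup H1] [InnerProductSpace ℝ H1] [CompleteSpace H1]
    [NormedAddCommGroup H2] [InnerProductSpace ℝ H2] [CompleteSpace H2]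
    (n k : ℕ) (hn : 0 < n) (hk : 0 < k)
    (φ1 : H1 → Fin n → E1) (φ2 : H2 → Fin n → E2)
    (θ1 : Fin k → E1) (θ2 : Fin k → E2) (W1 : H1) (W2 : H2)
    (ylab : Fin n → Fin k) (ε B B' : ℝ)
    (hlogit : ∀ i y, |(if ylab i = y then (1 : ℝ) else 0) -
        Real.exp (⟪θ1 y, φ1 W1 i⟫ + ⟪θ2 y, φ2 W2 i⟫) /
          ∑ j, Real.exp (⟪θ1 j, φ1 W1 i⟫ + ⟪θ2 j, φ2 W2 i⟫)| ≤ ε)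
    (hB1 : ∀ i, ‖φ1 W1 i‖ ≤ B) (hB2 : ∀ i, ‖φ2 W2 i‖ ≤ B)
    (g1 : Fin n → Fin k → H1) (g2 : Fin n → Fin k → H2)
    (hg1 : ∀ i y, HasGradientAt (fun W => ⟪θ1 y, φ1 W i⟫) (g1 i y) W1)
    (hg2 : ∀ i y, HasGradientAt (fun W => ⟪θ2 y, φ2 W i⟫) (g2 i y) W2)
    (hB'1 : ∀ i y, ‖g1 i y‖ ≤ B') (hB'2 : ∀ i y, ‖g2 i y‖ ≤ B') :
    -- gradients w.r.t. the classifier blocks are bounded by ε * B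
    (∀ y G, HasGradientAt (fun t : E1 =>
        ceLoss (fun i j => ⟪Function.update θ1 y t j, φ1 W1 i⟫ + ⟪θ2 j, φ2 W2 i⟫) ylab)
        G (θ1 y) → ‖G‖ ≤ ε * B) ∧
    (∀ y G, HasGradientAt (fun t : E2 =>
        ceLoss (fun i j => ⟪θ1 j, φ1 W1 i⟫ + ⟪Function.update θ2 y t j, φ2 W2 i⟫) ylab)
        G (θ2 y) → ‖G‖ ≤ ε * B) ∧
    -- gradients w.r.t. the encoder weights are bounded by k * ε * B'
    (∀ G, HasGradientAt (fun W : H1 =>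
        ceLoss (fun i j => ⟪θ1 j, φ1 W i⟫ + ⟪θ2 j, φ2 W2 i⟫) ylab) G W1 →
      ‖G‖ ≤ k * ε * B') ∧
    (∀ G, HasGradientAt (fun W : H2 =>
        ceLoss (fun i j => ⟪θ1 j, φ1 W1 i⟫ + ⟪θ2 j, φ2 W i⟫) ylab) G W2 →
      ‖G‖ ≤ k * ε * B') :=
  stmt_4_general n k hn φ1 φ2 θ1 θ2 W1 W2 ylab ε B B' hlogit hB1 hB2 g1 g2 hg1 hg2 hB'1 hB'2
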